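/- Let N ≥ 1 and a be integers with 1 ≤ a ≤ N, and for integers n ≥ k ≥ 0 set U_{k,n} = N·((a/N)_{n+1})² / ((n−k)! · (2a/N)_{n+k+1}). Then for each fixed k ≥ 0 the sequence n ↦ U_{k,n} is increasing in n, and for each fixed n the sequence k ↦ U_{k,n} is decreasing in k; in particular 0 ≤ U_{k,n} ≤ U_{0,n} for all n ≥ k ≥ 0. -/
import Mathlib

open Finset

/-- The Pochhammer symbol (rising factorial) `(x)_n = x(x+1)⋯(x+n−1)`. -/
noncomputable def poch (x : ℝ) (n : ℕ) : ℝ := (ascPochhammer ℝ n).eval x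

lemma poch_pos {x : ℝ} (hx : 0 < x) (n : ℕ) : 0 < poch x n :=
  ascPochhammer_pos n x hx

lemma poch_succ (x : ℝ) (n : ℕ) : poch x (n + 1) = poch x n * (x + n) := by
  simp [poch, ascPochhammer_succ_eval]

/-- From the proof of Lemma 3.2: with
`U_{k,n} = N·((a/N)_{n+1})² / ((n−k)!·(2a/N)_{n+k+1})` for `n ≥ k ≥ 0`,
the sequence `n ↦ U_{k,n}` is increasing in `n` for fixed `k`, the sequence
`k ↦ U_{k,n}` is decreasing in `k` for fixed `n`, and `0 ≤ U_{k,n} ≤ U_{0,n}`. -/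
theorem U_monotone
    (N a : ℕ) (h1 : 1 ≤ a) (h2 : a ≤ N)
    (U : ℕ → ℕ → ℝ)
    (hU : ∀ k n : ℕ, k ≤ n → U k n =
      (N : ℝ) * poch ((a : ℝ) / N) (n + 1) ^ 2 /
        ((n - k).factorial * poch (2 * (a : ℝ) / N) (n + k + 1))) :
    (∀ k n m : ℕ, k ≤ n → n ≤ m → U k n ≤ U k m) ∧
    (∀ n k k' : ℕ, k ≤ k' → k' ≤ n → U k' n ≤ U k n) ∧
    (∀ k n : ℕ, k ≤ n → 0 ≤ U k n ∧ U k n ≤ U 0 n) := by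
  have hN0 : (0:ℝ) < N := by
    have : 1 ≤ N := le_trans h1 h2
    exact_mod_cast Nat.lt_of_lt_of_le Nat.zero_lt_one this
  set x : ℝ := (a:ℝ)/N with hxdef
  have hx : 0 < x := by
    apply div_pos _ hN0; exact_mod_cast h1
  have hy : 2*(a:ℝ)/N = 2*x := by rw [hxdef, mul_div_assoc]
  have hx2 : 0 < 2*x := by positivity
  rw [hy] at hU
  -- positivity of U
  have hpos : ∀ k n : ℕ, k ≤ n → 0 < U k n := by
    intro k n hkn
    rw [hU k n hkn]
    have := poch_pos hx (n+1)
    have := poch_pos hx2 (n+k+1)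
    positivity
  -- step in n
  have stepn : ∀ k d : ℕ, U k (k+d) ≤ U k (k+d+1) := by
    intro k d
    rw [hU k (k+d) (by omega), hU k (k+d+1) (by omega)]
    have e1 : k + d - k = d := by omega
    have e2 : k + d + 1 - k = d + 1 := by omega
    rw [e1, e2]
    set P := poch x (k+d+1) with hP
    set Q := poch (2*x) (k+d+k+1) with hQ
    have hPp : 0 < P := poch_pos hx _
    have hQp : 0 < Q := poch_pos hx2 _
    have hp2 : poch x (k+d+1+1) = P * (x + ((k:ℝ)+d+1)) := by
      rw [hP, poch_succ]; push_cast; ring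
    have hq2 : poch (2*x) (k+d+1+k+1) = Q * (2*x + ((k:ℝ)+d+k+1)) := by
      have e : k+d+1+k+1 = (k+d+k+1)+1 := by omega
      rw [e, hQ, poch_succ]; push_cast; ring
    rw [hp2, hq2, Nat.factorial_succ]
    rw [div_le_div_iff₀ (by positivity) (by positivity)]
    push_cast
    have key : ((d:ℝ)+1) * (2*x + ((k:ℝ)+d+k+1)) ≤ (x + ((k:ℝ)+d+1))^2 := by
      nlinarith [sq_nonneg (x + (k:ℝ))]
    have hC : (0:ℝ) ≤ (N:ℝ) * P^2 * (d.factorial : ℝ) * Q := by positivity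
    nlinarith [mul_le_mul_of_nonneg_left key hC]
  -- step in k
  have stepk : ∀ k d : ℕ, U (k+1) (k+1+d) ≤ U k (k+1+d) := by
    intro k d
    rw [hU (k+1) (k+1+d) (by omega), hU k (k+1+d) (by omega)]
    have e1 : k + 1 + d - (k+1) = d := by omega
    have e2 : k + 1 + d - k = d + 1 := by omega
    rw [e1, e2]
    set Q := poch (2*x) (k+1+d+k+1) with hQ
    have hQp : 0 < Q := poch_pos hx2 _
    have hq2 : poch (2*x) (k+1+d+(k+1)+1) = Q * (2*x + ((k:ℝ)+1+d+k+1)) := by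
      have e : k+1+d+(k+1)+1 = (k+1+d+k+1)+1 := by omega
      rw [e, hQ, poch_succ]; push_cast; ring
    rw [hq2, Nat.factorial_succ]
    have hPp : 0 < poch x (k+1+d+1) := poch_pos hx _
    apply div_le_div_of_nonneg_left (by positivity) (by positivity)
    push_cast
    have hfac : (0:ℝ) < d.factorial := by exact_mod_cast d.factorial_pos
    have hk0 : (0:ℝ) ≤ (k:ℝ) := Nat.cast_nonneg k
    have hle : ((d:ℝ)+1) ≤ 2*x + ((k:ℝ)+1+(d:ℝ)+(k:ℝ)+1) := by linarith
    have hdQ : (0:ℝ) ≤ (d.factorial:ℝ)*Q := by positivity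
    nlinarith [mul_le_mul_of_nonneg_left hle hdQ]
  -- monotone in n
  have mono : ∀ k n m : ℕ, k ≤ n → n ≤ m → U k n ≤ U k m := by
    intro k n m hkn hnm
    obtain ⟨d, rfl⟩ := Nat.exists_eq_add_of_le hnm
    clear hnm
    induction d with
    | zero => simp
    | succ d ih =>
      refine le_trans ih ?_
      obtain ⟨e, rfl⟩ := Nat.exists_eq_add_of_le hkn
      have := stepn k (e + d)
      have e1 : k + (e + d) = k + e + d := by omega
      rw [e1] at this
      exact this
  -- antitone in k
  have anti : ∀ n k k' : ℕ, k ≤ k' → k' ≤ n → U k' n ≤ U k n := by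
    intro n k k' hkk hkn
    obtain ⟨j, rfl⟩ := Nat.exists_eq_add_of_le hkk
    clear hkk
    induction j with
    | zero => simp
    | succ j ih =>
      refine le_trans ?_ (ih (by omega))
      obtain ⟨e, he⟩ := Nat.exists_eq_add_of_le hkn
      have := stepk (k + j) e
      have h5 : k + j + 1 + e = n := by omega
      have h6 : k + (j + 1) = k + j + 1 := by omega
      rw [h5] at this
      rw [h6]
      exact this
  exact ⟨mono, anti, fun k n hkn => ⟨(hpos k n hkn).le, anti n 0 k (Nat.zero_le k) hkn⟩⟩
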